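/- arXiv:1607.06757 — 5 statements merged into one kernel-verified Lean document; each statement's English description precedes it below -/
import Mathlib

section
/- The vertex set of G_{W,U} can be covered by at most k pairwise vertex-disjoint cliques if and only if U contains an exact 3-cover, i.e., if and only if there exists a subfamily U' of U with |U'| = q such that every element of W belongs to some member of U'. -/
/-- The graph `G_{W,U}`: vertex set `V_W ⊎ V_U ⊎ A` where `V_W` is a clique,
`V_U` and `A` are independent sets, `v_w ~ v_u` iff `w ∈ u`, `A` is complete
to `V_U` and anticomplete to `V_W`. Here `A` has `m` vertices. -/
def GWU {W : Type} (U : Finset (Finset W)) (m : ℕ) :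
    SimpleGraph (W ⊕ ({u // u ∈ U} ⊕ Fin m)) :=
  SimpleGraph.fromRel fun x y =>
    match x, y with
    | Sum.inl _, Sum.inl _ => True
    | Sum.inl w, Sum.inr (Sum.inl u) => w ∈ u.1
    | Sum.inr (Sum.inl _), Sum.inr (Sum.inr _) => True
    | _, _ => False

section aux
variable {W : Type} {U : Finset (Finset W)} {m : ℕ}

lemma adj_ww {w w' : W} : (GWU U m).Adj (Sum.inl w) (Sum.inl w') ↔ w ≠ w' := by
  simp [GWU, SimpleGraph.fromRel_adj]

lemma adj_wu {w : W} {u : {u // u ∈ U}} :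
    (GWU U m).Adj (Sum.inl w) (Sum.inr (Sum.inl u)) ↔ w ∈ u.1 := by
  simp [GWU, SimpleGraph.fromRel_adj]

lemma adj_ua {u : {u // u ∈ U}} {a : Fin m} :
    (GWU U m).Adj (Sum.inr (Sum.inl u)) (Sum.inr (Sum.inr a)) := by
  simp [GWU, SimpleGraph.fromRel_adj]

lemma not_adj_uu {u u' : {u // u ∈ U}} :
    ¬ (GWU U m).Adj (Sum.inr (Sum.inl u)) (Sum.inr (Sum.inl u')) := by
  simp [GWU, SimpleGraph.fromRel_adj]

lemma not_adj_aa {a a' : Fin m} :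
    ¬ (GWU U m).Adj (Sum.inr (Sum.inr a)) (Sum.inr (Sum.inr a')) := by
  simp [GWU, SimpleGraph.fromRel_adj]

lemma not_adj_wa {w : W} {a : Fin m} :
    ¬ (GWU U m).Adj (Sum.inl w) (Sum.inr (Sum.inr a)) := by
  simp [GWU, SimpleGraph.fromRel_adj]
end aux

private lemma fwd {W : Type} [Fintype W] [DecidableEq W] (q k : ℕ) (hq : 0 < q)
    (hqk : q ≤ k) (hW : Fintype.card W = 3 * q) (U : Finset (Finset W))
    (hUcard : U.card = k) (hU3 : ∀ u ∈ U, u.card = 3)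
    (h : ∃ F : Finset (Finset (W ⊕ ({u // u ∈ U} ⊕ Fin (k - q)))),
      F.card ≤ k ∧
      (∀ c ∈ F, (GWU U (k - q)).IsClique (c : Set (W ⊕ ({u // u ∈ U} ⊕ Fin (k - q))))) ∧
      (∀ c ∈ F, ∀ d ∈ F, c ≠ d → Disjoint c d) ∧
      (∀ v, ∃ c ∈ F, v ∈ c)) :
    (∃ U' ⊆ U, U'.card = q ∧ ∀ w : W, ∃ u ∈ U', w ∈ u) := by
  classical
  obtain ⟨F, hFcard, hFclique, hFdisj, hFcover⟩ := h
  -- clique containing each u-vertex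
  choose cU hcUF hcUmem using fun u : {u // u ∈ U} => hFcover (Sum.inr (Sum.inl u))
  have cUinj : Function.Injective cU := by
    intro u u' h
    by_contra hne
    have hne' : (Sum.inr (Sum.inl u) : W ⊕ ({u // u ∈ U} ⊕ Fin (k - q))) ≠
        Sum.inr (Sum.inl u') := by simp [hne]
    have := (hFclique _ (hcUF u)) (by simpa using hcUmem u)
      (by rw [h]; simpa using hcUmem u') hne'
    exact not_adj_uu this
  have hcardU : Fintype.card {u // u ∈ U} = k := by
    rw [Fintype.card_coe, hUcard]
  have himg : (Finset.univ.image cU) = F := by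
    apply Finset.eq_of_subset_of_card_le
    · intro c hc
      simp only [Finset.mem_image] at hc
      obtain ⟨u, _, rfl⟩ := hc
      exact hcUF u
    · rw [Finset.card_image_of_injective _ cUinj, Finset.card_univ, hcardU]
      exact hFcard
  -- clique containing each a-vertex
  choose cA hcAF hcAmem using fun a : Fin (k - q) => hFcover (Sum.inr (Sum.inr a))
  have hka : ∀ a : Fin (k - q), ∃ u, cU u = cA a := by
    intro a
    have : cA a ∈ Finset.univ.image cU := by rw [himg]; exact hcAF a
    simpa using this
  choose ka hkaeq using hka
  have kainj : Function.Injective ka := by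
    intro a a' h
    by_contra hne
    have hc : cA a = cA a' := by rw [← hkaeq a, ← hkaeq a', h]
    have hne' : (Sum.inr (Sum.inr a) : W ⊕ ({u // u ∈ U} ⊕ Fin (k - q))) ≠
        Sum.inr (Sum.inr a') := by simp [hne]
    have := (hFclique _ (hcAF a)) (by simpa using hcAmem a)
      (by rw [hc]; simpa using hcAmem a') hne'
    exact not_adj_aa this
  -- clique containing each w-vertex
  choose cW hcWF hcWmem using fun w : W => hFcover (Sum.inl w)
  have hhw : ∀ w : W, ∃ u, cU u = cW w := by
    intro w
    have : cW w ∈ Finset.univ.image cU := by rw [himg]; exact hcWF w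
    simpa using this
  choose hw hhweq using hhw
  have hwmem : ∀ w : W, w ∈ (hw w).1 := by
    intro w
    have h1 : (Sum.inl w : W ⊕ ({u // u ∈ U} ⊕ Fin (k - q))) ∈ (cW w : Set _) := by
      simpa using hcWmem w
    have h2 : (Sum.inr (Sum.inl (hw w)) : W ⊕ ({u // u ∈ U} ⊕ Fin (k - q))) ∈
        (cW w : Set _) := by
      rw [← hhweq w]; simpa using hcUmem (hw w)
    have := (hFclique _ (hcWF w)) h1 h2 (by simp)
    exact adj_wu.mp this
  have hwka : ∀ w a, hw w ≠ ka a := by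
    intro w a h
    have hc : cW w = cA a := by rw [← hhweq w, h, hkaeq a]
    have h1 : (Sum.inl w : W ⊕ ({u // u ∈ U} ⊕ Fin (k - q))) ∈ (cW w : Set _) := by
      simpa using hcWmem w
    have h2 : (Sum.inr (Sum.inr a) : W ⊕ ({u // u ∈ U} ⊕ Fin (k - q))) ∈ (cW w : Set _) := by
      rw [hc]; simpa using hcAmem a
    exact not_adj_wa ((hFclique _ (hcWF w)) h1 h2 (by simp))
  -- build U'
  set S : Finset {u // u ∈ U} := Finset.univ \ Finset.univ.image ka with hS
  have hScard : S.card = q := by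
    rw [hS, Finset.card_sdiff_of_subset (Finset.subset_univ _), Finset.card_univ, hcardU,
      Finset.card_image_of_injective _ kainj, Finset.card_univ, Fintype.card_fin]
    omega
  refine ⟨S.image (Subtype.val), ?_, ?_, ?_⟩
  · intro x hx
    simp only [Finset.mem_image] at hx
    obtain ⟨u, _, rfl⟩ := hx
    exact u.2
  · rw [Finset.card_image_of_injective _ Subtype.val_injective, hScard]
  · intro w
    refine ⟨(hw w).1, ?_, hwmem w⟩
    simp only [Finset.mem_image]
    refine ⟨hw w, ?_, rfl⟩
    simp only [hS, Finset.mem_sdiff, Finset.mem_univ, true_and, Finset.mem_image]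
    rintro ⟨a, h⟩
    exact hwka w a h.symm

private lemma bwd {W : Type} [Fintype W] [DecidableEq W] (q k : ℕ) (hq : 0 < q)
    (hqk : q ≤ k) (hW : Fintype.card W = 3 * q) (U : Finset (Finset W))
    (hUcard : U.card = k) (hU3 : ∀ u ∈ U, u.card = 3)
    (h : ∃ U' ⊆ U, U'.card = q ∧ ∀ w : W, ∃ u ∈ U', w ∈ u) :
    (∃ F : Finset (Finset (W ⊕ ({u // u ∈ U} ⊕ Fin (k - q)))),
      F.card ≤ k ∧
      (∀ c ∈ F, (GWU U (k - q)).IsClique (c : Set (W ⊕ ({u // u ∈ U} ⊕ Fin (k - q))))) ∧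
      (∀ c ∈ F, ∀ d ∈ F, c ≠ d → Disjoint c d) ∧
      (∀ v, ∃ c ∈ F, v ∈ c)) := by
  classical
  obtain ⟨U', hU'U, hU'card, hcov⟩ := h
  choose φ hφU' hφw using hcov
  -- the u's outside U'
  set T : Finset {u // u ∈ U} := U.attach.filter (fun u => u.1 ∉ U') with hT
  have hTm : T.card = k - q := by
    have h1 : (U.attach.filter (fun u => u.1 ∈ U')).card +
        (U.attach.filter (fun u => u.1 ∉ U')).card = U.attach.card :=
      Finset.card_filter_add_card_filter_not _
    have h2 : (U.attach.filter (fun u => u.1 ∈ U')).image Subtype.val = U' := by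
      ext x
      simp only [Finset.mem_image, Finset.mem_filter, Finset.mem_attach, true_and]
      constructor
      · rintro ⟨u, hu, rfl⟩; exact hu
      · intro hx; exact ⟨⟨x, hU'U hx⟩, hx, rfl⟩
    have h3 : (U.attach.filter (fun u => u.1 ∈ U')).card = q := by
      have := congrArg Finset.card h2
      rw [Finset.card_image_of_injective _ Subtype.val_injective] at this
      rw [this, hU'card]
    rw [Finset.card_attach, hUcard] at h1
    rw [hT]
    omega
  -- injection from Fin (k-q) into T
  set e : Fin (k - q) → {u // u ∈ U} :=
    fun a => (T.equivFin.symm (Fin.cast hTm.symm a)).1 with he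
  have heT : ∀ a, e a ∈ T := fun a => (T.equivFin.symm (Fin.cast hTm.symm a)).2
  have heU' : ∀ a, (e a).1 ∉ U' := by
    intro a
    have := heT a
    rw [hT, Finset.mem_filter] at this
    exact this.2
  have heinj : Function.Injective e := by
    intro a a' hh
    have := Subtype.val_injective hh
    have := T.equivFin.symm.injective this
    simpa [Fin.ext_iff] using this
  -- the cliques
  set C : ∀ u ∈ U', Finset (W ⊕ ({u // u ∈ U} ⊕ Fin (k - q))) :=
    fun u hu => insert (Sum.inr (Sum.inl ⟨u, hU'U hu⟩))
      ((Finset.univ.filter (fun w => φ w = u)).image Sum.inl) with hC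
  set P : Fin (k - q) → Finset (W ⊕ ({u // u ∈ U} ⊕ Fin (k - q))) :=
    fun a => {Sum.inr (Sum.inr a), Sum.inr (Sum.inl (e a))} with hP
  refine ⟨U'.attach.image (fun u => C u.1 u.2) ∪ Finset.univ.image P, ?_, ?_, ?_, ?_⟩
  · -- card
    calc (U'.attach.image (fun u => C u.1 u.2) ∪ Finset.univ.image P).card
        ≤ (U'.attach.image (fun u => C u.1 u.2)).card + (Finset.univ.image P).card :=
          Finset.card_union_le _ _
      _ ≤ U'.attach.card + (Finset.univ : Finset (Fin (k - q))).card :=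
          Nat.add_le_add (Finset.card_image_le) (Finset.card_image_le)
      _ = q + (k - q) := by rw [Finset.card_attach, hU'card, Finset.card_univ, Fintype.card_fin]
      _ ≤ k := by omega
  · -- cliques
    intro c hc
    rw [Finset.mem_union] at hc
    rcases hc with hc | hc
    · simp only [Finset.mem_image, Finset.mem_attach, true_and] at hc
      obtain ⟨u, rfl⟩ := hc
      rw [SimpleGraph.isClique_iff]
      intro x hx y hy hne
      simp only [hC, Finset.coe_insert, Finset.coe_image, Finset.coe_filter,
        Set.mem_insert_iff, Set.mem_image, Set.mem_setOf_eq, Finset.mem_univ, true_and] at hx hy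
      rcases hx with rfl | ⟨w, hw, rfl⟩ <;> rcases hy with rfl | ⟨w', hw', rfl⟩
      · exact absurd rfl hne
      · exact (adj_wu.mpr (by rw [← hw']; exact hφw w')).symm
      · exact adj_wu.mpr (by rw [← hw]; exact hφw w)
      · exact adj_ww.mpr (by rintro rfl; exact hne rfl)
    · simp only [Finset.mem_image, Finset.mem_univ, true_and] at hc
      obtain ⟨a, rfl⟩ := hc
      rw [SimpleGraph.isClique_iff]
      intro x hx y hy hne
      simp only [hP, Finset.coe_insert, Finset.coe_singleton, Set.mem_insert_iff,
        Set.mem_singleton_iff] at hx hy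
      rcases hx with rfl | rfl <;> rcases hy with rfl | rfl
      · exact absurd rfl hne
      · exact adj_ua.symm
      · exact adj_ua
      · exact absurd rfl hne
  · -- disjoint
    intro c hc d hd hne
    rw [Finset.mem_union] at hc hd
    rw [Finset.disjoint_left]
    intro x hxc hxd
    rcases hc with hc | hc <;> rcases hd with hd | hd
    · simp only [Finset.mem_image, Finset.mem_attach, true_and] at hc hd
      obtain ⟨u, rfl⟩ := hc
      obtain ⟨u', rfl⟩ := hd
      have huu' : u.1 ≠ u'.1 := by
        intro hh
        have : u = u' := Subtype.ext hh
        subst this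
        exact hne rfl
      simp only [hC, Finset.mem_insert, Finset.mem_image, Finset.mem_filter,
        Finset.mem_univ, true_and] at hxc hxd
      rcases hxc with rfl | ⟨w, hw, rfl⟩ <;> rcases hxd with h' | ⟨w', hw', h'⟩
      · simp only [Sum.inr.injEq, Sum.inl.injEq, Subtype.mk.injEq] at h'
        exact huu' h'
      · exact absurd h' (by simp)
      · exact absurd h' (by simp)
      · rw [Sum.inl.injEq] at h'
        exact huu' (by rw [← hw, ← h', hw'])
    · simp only [Finset.mem_image, Finset.mem_attach, true_and] at hc hd
      obtain ⟨u, rfl⟩ := hc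
      obtain ⟨a, -, rfl⟩ := hd
      simp only [hC, hP, Finset.mem_insert, Finset.mem_image, Finset.mem_filter,
        Finset.mem_univ, true_and, Finset.mem_singleton] at hxc hxd
      rcases hxc with rfl | ⟨w, hw, rfl⟩ <;> rcases hxd with h' | h'
      · simp at h'
      · simp only [Sum.inr.injEq, Sum.inl.injEq] at h'
        have h'' : (⟨u.1, hU'U u.2⟩ : {u // u ∈ U}).1 = (e a).1 := congrArg Subtype.val h'
        exact heU' a (by rw [← h'']; exact u.2)
      · simp at h'
      · simp at h'
    · simp only [Finset.mem_image, Finset.mem_attach, true_and] at hc hd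
      obtain ⟨a, -, rfl⟩ := hc
      obtain ⟨u, rfl⟩ := hd
      simp only [hC, hP, Finset.mem_insert, Finset.mem_image, Finset.mem_filter,
        Finset.mem_univ, true_and, Finset.mem_singleton] at hxc hxd
      rcases hxc with rfl | rfl <;> rcases hxd with h' | ⟨w, hw, h'⟩
      · simp at h'
      · simp at h'
      · simp only [Sum.inr.injEq, Sum.inl.injEq] at h'
        have h'' : (e a).1 = (⟨u.1, hU'U u.2⟩ : {u // u ∈ U}).1 := congrArg Subtype.val h'
        exact heU' a (by rw [h'']; exact u.2)
      · simp at h'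
    · simp only [Finset.mem_image, Finset.mem_univ, true_and] at hc hd
      obtain ⟨a, rfl⟩ := hc
      obtain ⟨a', rfl⟩ := hd
      have haa' : a ≠ a' := by rintro rfl; exact hne rfl
      simp only [hP, Finset.mem_insert, Finset.mem_singleton] at hxc hxd
      rcases hxc with rfl | rfl <;> rcases hxd with h' | h'
      · simp only [Sum.inr.injEq] at h'
        exact haa' h'
      · simp at h'
      · simp at h'
      · simp only [Sum.inr.injEq, Sum.inl.injEq] at h'
        exact haa' (heinj h')
  · -- cover
    intro v
    match v with
    | Sum.inl w =>
      refine ⟨C (φ w) (hφU' w), ?_, ?_⟩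
      · rw [Finset.mem_union]
        left
        simp only [Finset.mem_image, Finset.mem_attach, true_and]
        exact ⟨⟨φ w, hφU' w⟩, rfl⟩
      · simp only [hC, Finset.mem_insert, Finset.mem_image, Finset.mem_filter,
          Finset.mem_univ, true_and]
        right
        exact ⟨w, rfl, rfl⟩
    | Sum.inr (Sum.inl u) =>
      by_cases hu : u.1 ∈ U'
      · refine ⟨C u.1 hu, ?_, ?_⟩
        · rw [Finset.mem_union]
          left
          simp only [Finset.mem_image, Finset.mem_attach, true_and]
          exact ⟨⟨u.1, hu⟩, rfl⟩
        · simp only [hC, Finset.mem_insert]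
          exact Or.inl trivial
      · have huT : u ∈ T := by
          rw [hT, Finset.mem_filter]
          exact ⟨Finset.mem_attach _ _, hu⟩
        refine ⟨P (Fin.cast hTm (T.equivFin ⟨u, huT⟩)), ?_, ?_⟩
        · rw [Finset.mem_union]
          right
          simp only [Finset.mem_image, Finset.mem_univ, true_and]
          exact ⟨_, rfl⟩
        · simp only [hP, Finset.mem_insert, Finset.mem_singleton]
          right
          have key : e (Fin.cast hTm (T.equivFin ⟨u, huT⟩)) = u := by
            simp only [he]
            exact congrArg Subtype.val (T.equivFin.symm_apply_apply ⟨u, huT⟩)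
          rw [key]
    | Sum.inr (Sum.inr a) =>
      refine ⟨P a, ?_, ?_⟩
      · rw [Finset.mem_union]
        right
        simp only [Finset.mem_image, Finset.mem_univ, true_and]
        exact ⟨a, rfl⟩
      · simp [hP]

/-- The vertices of `G_{W,U}` can be covered by at most `k` pairwise disjoint
cliques if and only if `U` contains an exact 3-cover. -/
theorem stmt_4 {W : Type} [Fintype W] [DecidableEq W] (q k : ℕ) (hq : 0 < q)
    (hqk : q ≤ k) (hW : Fintype.card W = 3 * q) (U : Finset (Finset W))
    (hUcard : U.card = k) (hU3 : ∀ u ∈ U, u.card = 3) :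
    (∃ F : Finset (Finset (W ⊕ ({u // u ∈ U} ⊕ Fin (k - q)))),
      F.card ≤ k ∧
      (∀ c ∈ F, (GWU U (k - q)).IsClique (c : Set (W ⊕ ({u // u ∈ U} ⊕ Fin (k - q))))) ∧
      (∀ c ∈ F, ∀ d ∈ F, c ≠ d → Disjoint c d) ∧
      (∀ v, ∃ c ∈ F, v ∈ c)) ↔
    (∃ U' ⊆ U, U'.card = q ∧ ∀ w : W, ∃ u ∈ U', w ∈ u) := by
  exact ⟨fwd q k hq hqk hW U hUcard hU3, bwd q k hq hqk hW U hUcard hU3⟩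
end

section
/- The graph G_{W,U} is (P1+2P2)-free, i.e., it contains no induced subgraph isomorphic to the disjoint union of a single vertex and two 2-vertex paths. -/
/-- `G` contains no induced subgraph isomorphic to `H`. -/
def InducedFree {α V : Type*} (G : SimpleGraph V) (H : SimpleGraph α) : Prop :=
  ∀ f : α ↪ V, ¬ (∀ a b : α, H.Adj a b ↔ G.Adj (f a) (f b))

/-- `P₁ + 2P₂`: one isolated vertex and two disjoint edges. -/
def P1Plus2P2 : SimpleGraph (Fin 5) :=
  SimpleGraph.fromRel fun a b => (a = 1 ∧ b = 2) ∨ (a = 3 ∧ b = 4)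

set_option maxHeartbeats 2000000 in
lemma key {W : Type} (U : Finset (Finset W)) (m : ℕ)
    (x0 x1 x2 x3 x4 : W ⊕ ({u // u ∈ U} ⊕ Fin m))
    (h12 : (GWU U m).Adj x1 x2) (h34 : (GWU U m).Adj x3 x4)
    (n13 : ¬ (GWU U m).Adj x1 x3) (n14 : ¬ (GWU U m).Adj x1 x4)
    (n23 : ¬ (GWU U m).Adj x2 x3) (n24 : ¬ (GWU U m).Adj x2 x4)
    (n01 : ¬ (GWU U m).Adj x0 x1) (n02 : ¬ (GWU U m).Adj x0 x2)
    (n03 : ¬ (GWU U m).Adj x0 x3) (n04 : ¬ (GWU U m).Adj x0 x4)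
    (ne01 : x0 ≠ x1) (ne02 : x0 ≠ x2) (ne03 : x0 ≠ x3) (ne04 : x0 ≠ x4)
    (ne13 : x1 ≠ x3) (ne14 : x1 ≠ x4) (ne23 : x2 ≠ x3) (ne24 : x2 ≠ x4) :
    False := by
  simp only [GWU, SimpleGraph.fromRel_adj] at *
  rcases x0 with w0 | u0 | a0 <;> rcases x1 with w1 | u1 | a1 <;>
    rcases x2 with w2 | u2 | a2 <;> rcases x3 with w3 | u3 | a3 <;>
    rcases x4 with w4 | u4 | a4 <;>
    simp_all

lemma P1adj (a b : Fin 5) :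
    P1Plus2P2.Adj a b ↔ a ≠ b ∧ (((a = 1 ∧ b = 2) ∨ (a = 3 ∧ b = 4)) ∨
      ((b = 1 ∧ a = 2) ∨ (b = 3 ∧ a = 4))) := by
  simp [P1Plus2P2, SimpleGraph.fromRel_adj]

/-- `G_{W,U}` is `(P₁ + 2P₂)`-free. -/
theorem stmt_5 {W : Type} [Fintype W] [DecidableEq W] (q k : ℕ) (hq : 0 < q)
    (hqk : q ≤ k) (hW : Fintype.card W = 3 * q) (U : Finset (Finset W))
    (hUcard : U.card = k) (hU3 : ∀ u ∈ U, u.card = 3) :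
    InducedFree (GWU U (k - q)) P1Plus2P2 := by
  intro f hf
  exact key U (k - q) (f 0) (f 1) (f 2) (f 3) (f 4)
    ((hf 1 2).mp ((P1adj 1 2).mpr (by decide)))
    ((hf 3 4).mp ((P1adj 3 4).mpr (by decide)))
    (fun h => absurd ((P1adj 1 3).mp ((hf 1 3).mpr h)) (by decide))
    (fun h => absurd ((P1adj 1 4).mp ((hf 1 4).mpr h)) (by decide))
    (fun h => absurd ((P1adj 2 3).mp ((hf 2 3).mpr h)) (by decide))
    (fun h => absurd ((P1adj 2 4).mp ((hf 2 4).mpr h)) (by decide))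
    (fun h => absurd ((P1adj 0 1).mp ((hf 0 1).mpr h)) (by decide))
    (fun h => absurd ((P1adj 0 2).mp ((hf 0 2).mpr h)) (by decide))
    (fun h => absurd ((P1adj 0 3).mp ((hf 0 3).mpr h)) (by decide))
    (fun h => absurd ((P1adj 0 4).mp ((hf 0 4).mpr h)) (by decide))
    (f.injective.ne (by decide)) (f.injective.ne (by decide))
    (f.injective.ne (by decide)) (f.injective.ne (by decide))
    (f.injective.ne (by decide)) (f.injective.ne (by decide))
    (f.injective.ne (by decide)) (f.injective.ne (by decide))
end

section
/- The graph G_{W,U} contains no induced subgraph isomorphic to the complement of P1+2P2, i.e., no induced copy of the 5-vertex wheel consisting of a 4-cycle together with a fifth vertex adjacent to all four cycle vertices. -/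
/-- `G_{W,U}` contains no induced copy of the complement of `P₁ + 2P₂`
(the 5-vertex wheel). -/
theorem stmt_6 {W : Type} [Fintype W] [DecidableEq W] (q k : ℕ) (hq : 0 < q)
    (hqk : q ≤ k) (hW : Fintype.card W = 3 * q) (U : Finset (Finset W))
    (hUcard : U.card = k) (hU3 : ∀ u ∈ U, u.card = 3) :
    InducedFree (GWU U (k - q)) P1Plus2P2ᶜ := by
  intro f hf
  set G := GWU U (k - q) with hG
  -- basic adjacency facts in G
  have nII : ∀ (u u' : {u // u ∈ U}),
      ¬ G.Adj (Sum.inr (Sum.inl u)) (Sum.inr (Sum.inl u')) := by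
    intro u u'; simp [hG, GWU, SimpleGraph.fromRel_adj]
  have nAA : ∀ (a a' : Fin (k - q)),
      ¬ G.Adj (Sum.inr (Sum.inr a)) (Sum.inr (Sum.inr a')) := by
    intro a a'; simp [hG, GWU, SimpleGraph.fromRel_adj]
  have nCA : ∀ (w : W) (a : Fin (k - q)),
      ¬ G.Adj (Sum.inl w) (Sum.inr (Sum.inr a)) := by
    intro w a; simp [hG, GWU, SimpleGraph.fromRel_adj]
  have aCC : ∀ (w w' : W), w ≠ w' → G.Adj (Sum.inl w) (Sum.inl w') := by
    intro w w' h; simp [hG, GWU, SimpleGraph.fromRel_adj, h]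
  -- adjacency facts transported through f
  have h01 : G.Adj (f 0) (f 1) := (hf 0 1).mp (by
    simp [P1Plus2P2, SimpleGraph.compl_adj, SimpleGraph.fromRel_adj])
  have h02 : G.Adj (f 0) (f 2) := (hf 0 2).mp (by
    simp [P1Plus2P2, SimpleGraph.compl_adj, SimpleGraph.fromRel_adj])
  have h03 : G.Adj (f 0) (f 3) := (hf 0 3).mp (by
    simp [P1Plus2P2, SimpleGraph.compl_adj, SimpleGraph.fromRel_adj])
  have h04 : G.Adj (f 0) (f 4) := (hf 0 4).mp (by
    simp [P1Plus2P2, SimpleGraph.compl_adj, SimpleGraph.fromRel_adj])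
  have h13 : G.Adj (f 1) (f 3) := (hf 1 3).mp (by
    simp [P1Plus2P2, SimpleGraph.compl_adj, SimpleGraph.fromRel_adj])
  have h14 : G.Adj (f 1) (f 4) := (hf 1 4).mp (by
    simp [P1Plus2P2, SimpleGraph.compl_adj, SimpleGraph.fromRel_adj])
  have h23 : G.Adj (f 2) (f 3) := (hf 2 3).mp (by
    simp [P1Plus2P2, SimpleGraph.compl_adj, SimpleGraph.fromRel_adj])
  have h24 : G.Adj (f 2) (f 4) := (hf 2 4).mp (by
    simp [P1Plus2P2, SimpleGraph.compl_adj, SimpleGraph.fromRel_adj])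
  have n12 : ¬ G.Adj (f 1) (f 2) := fun h => by
    have := (hf 1 2).mpr h
    simp [P1Plus2P2, SimpleGraph.compl_adj, SimpleGraph.fromRel_adj] at this
  have n34 : ¬ G.Adj (f 3) (f 4) := fun h => by
    have := (hf 3 4).mpr h
    simp [P1Plus2P2, SimpleGraph.compl_adj, SimpleGraph.fromRel_adj] at this
  have hne : ∀ i j : Fin 5, i ≠ j → f i ≠ f j := fun i j h hh => h (f.injective hh)
  -- case analysis on the hub f 0
  rcases hE0 : f 0 with w0 | u0 | a0
  · -- hub in the clique V_W
    rw [hE0] at h01 h02 h03 h04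
    have pick : ∀ i j : Fin 5, ¬ G.Adj (f i) (f j) → f i ≠ f j →
        G.Adj (Sum.inl w0) (f i) → G.Adj (Sum.inl w0) (f j) →
        (∃ u, f i = Sum.inr (Sum.inl u)) ∨ (∃ u, f j = Sum.inr (Sum.inl u)) := by
      intro i j nij hij hi hj
      rcases hEi : f i with wi | ui | ai
      · rcases hEj : f j with wj | uj | aj
        · exfalso; rw [hEi, hEj] at nij hij
          exact nij (aCC _ _ (fun h => hij (by rw [h])))
        · exact Or.inr ⟨uj, rfl⟩
        · exfalso; rw [hEj] at hj; exact nCA _ _ hj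
      · exact Or.inl ⟨ui, rfl⟩
      · exfalso; rw [hEi] at hi; exact nCA _ _ hi
    rcases pick 1 2 n12 (hne 1 2 (by decide)) h01 h02 with ⟨u1, e1⟩ | ⟨u2, e2⟩ <;>
      rcases pick 3 4 n34 (hne 3 4 (by decide)) h03 h04 with ⟨u3, e3⟩ | ⟨u4, e4⟩
    · rw [e1, e3] at h13; exact nII _ _ h13
    · rw [e1, e4] at h14; exact nII _ _ h14
    · rw [e2, e3] at h23; exact nII _ _ h23
    · rw [e2, e4] at h24; exact nII _ _ h24
  · -- hub in the independent set V_U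
    rw [hE0] at h01 h02 h03
    -- f 1 must be in the clique
    have g1 : ∃ w, f 1 = Sum.inl w := by
      rcases hE1 : f 1 with w1 | u1 | a1
      · exact ⟨w1, rfl⟩
      · exfalso; rw [hE1] at h01; exact nII _ _ h01
      · exfalso; rw [hE1] at h13
        rcases hE3 : f 3 with w3 | u3 | a3
        · rw [hE3] at h13; exact nCA _ _ h13.symm
        · rw [hE3] at h03; exact nII _ _ h03
        · rw [hE3] at h13; exact nAA _ _ h13
    have g2 : ∃ w, f 2 = Sum.inl w := by
      rcases hE2 : f 2 with w2 | u2 | a2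
      · exact ⟨w2, rfl⟩
      · exfalso; rw [hE2] at h02; exact nII _ _ h02
      · exfalso; rw [hE2] at h23
        rcases hE3 : f 3 with w3 | u3 | a3
        · rw [hE3] at h23; exact nCA _ _ h23.symm
        · rw [hE3] at h03; exact nII _ _ h03
        · rw [hE3] at h23; exact nAA _ _ h23
    obtain ⟨w1, e1⟩ := g1
    obtain ⟨w2, e2⟩ := g2
    rw [e1, e2] at n12
    have hw : w1 ≠ w2 := fun h => hne 1 2 (by decide) (by rw [e1, e2, h])
    exact n12 (aCC _ _ hw)
  · -- hub in the independent set A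
    rw [hE0] at h01 h03
    have g1 : ∃ u, f 1 = Sum.inr (Sum.inl u) := by
      rcases hE1 : f 1 with w1 | u1 | a1
      · exfalso; rw [hE1] at h01; exact nCA _ _ h01.symm
      · exact ⟨u1, rfl⟩
      · exfalso; rw [hE1] at h01; exact nAA _ _ h01
    have g3 : ∃ u, f 3 = Sum.inr (Sum.inl u) := by
      rcases hE3 : f 3 with w3 | u3 | a3
      · exfalso; rw [hE3] at h03; exact nCA _ _ h03.symm
      · exact ⟨u3, rfl⟩
      · exfalso; rw [hE3] at h03; exact nAA _ _ h03
    obtain ⟨u1, e1⟩ := g1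
    obtain ⟨u3, e3⟩ := g3
    rw [e1, e3] at h13
    exact nII _ _ h13
end

section
/- The graph G_{W,U} is 2P3-free, i.e., it contains no induced subgraph isomorphic to the disjoint union of two 3-vertex paths. -/
/-- `2P₃`: the disjoint union of two paths on 3 vertices. -/
def TwoP3 : SimpleGraph (Fin 6) :=
  SimpleGraph.fromRel fun a b =>
    (a = 0 ∧ b = 1) ∨ (a = 1 ∧ b = 2) ∨ (a = 3 ∧ b = 4) ∨ (a = 4 ∧ b = 5)

/-- Auxiliary: if an induced copy of `2P₃` has a `V_U`-vertex in each path, we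
get a contradiction. -/
lemma gwu_aux {W : Type} (U : Finset (Finset W)) (m : ℕ)
    (f : Fin 6 ↪ (W ⊕ ({u // u ∈ U} ⊕ Fin m)))
    (hf : ∀ a b : Fin 6, TwoP3.Adj a b ↔ (GWU U m).Adj (f a) (f b))
    (j1 j2 : Fin 6) (hj1 : (j1 : ℕ) < 3) (hj2 : 3 ≤ (j2 : ℕ))
    (u1 u2 : {u // u ∈ U})
    (h1 : f j1 = Sum.inr (Sum.inl u1)) (h2 : f j2 = Sum.inr (Sum.inl u2)) :
    False := by
  have cross : ∀ a b : Fin 6, TwoP3.Adj a b → ((a : ℕ) < 3 ↔ (b : ℕ) < 3) := by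
    simp only [TwoP3, SimpleGraph.fromRel_adj]
    decide
  -- no vertex of the copy lies in `A`
  have hA : ∀ (i : Fin 6) (x : Fin m), f i ≠ Sum.inr (Sum.inr x) := by
    intro i x hi
    by_cases hi3 : (i : ℕ) < 3
    · have hadj : TwoP3.Adj i j2 := (hf i j2).mpr (by rw [hi, h2]; simp [GWU])
      have := cross i j2 hadj
      omega
    · have hadj : TwoP3.Adj i j1 := (hf i j1).mpr (by rw [hi, h1]; simp [GWU])
      have := cross i j1 hadj
      omega
  -- the middle vertex of each path lies in `V_W`
  have hmid : ∀ a b c : Fin 6, TwoP3.Adj a b → TwoP3.Adj b c → ¬ TwoP3.Adj a c →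
      a ≠ c → ∃ w, f b = Sum.inl w := by
    intro a b c hab hbc hac hac2
    rcases hb : f b with w | u | x
    · exact ⟨w, rfl⟩
    · exfalso
      have Hab := (hf a b).mp hab
      have Hbc := (hf b c).mp hbc
      rw [hb] at Hab Hbc
      rcases ha : f a with w' | u' | x'
      · rcases hc : f c with w'' | u'' | x''
        · have hne : w' ≠ w'' := by
            intro e
            exact hac2 (f.injective (by rw [ha, hc, e]))
          exact hac ((hf a c).mpr (by rw [ha, hc]; simp [GWU, hne]))
        · rw [hc] at Hbc; simp [GWU] at Hbc
        · exact hA c x'' hc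
      · rw [ha] at Hab; simp [GWU] at Hab
      · exact hA a x' ha
    · exact (hA b x hb).elim
  obtain ⟨w1, hw1⟩ := hmid 0 1 2
    (by simp only [TwoP3, SimpleGraph.fromRel_adj]; decide)
    (by simp only [TwoP3, SimpleGraph.fromRel_adj]; decide)
    (by simp only [TwoP3, SimpleGraph.fromRel_adj]; decide) (by decide)
  obtain ⟨w4, hw4⟩ := hmid 3 4 5
    (by simp only [TwoP3, SimpleGraph.fromRel_adj]; decide)
    (by simp only [TwoP3, SimpleGraph.fromRel_adj]; decide)
    (by simp only [TwoP3, SimpleGraph.fromRel_adj]; decide) (by decide)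
  have hne : w1 ≠ w4 := by
    intro e
    exact (by decide : (1 : Fin 6) ≠ 4) (f.injective (by rw [hw1, hw4, e]))
  have hadj : TwoP3.Adj 1 4 := (hf 1 4).mpr (by rw [hw1, hw4]; simp [GWU, hne])
  revert hadj
  simp only [TwoP3, SimpleGraph.fromRel_adj]
  decide

/-- `G_{W,U}` is `2P₃`-free. -/
theorem stmt_7 {W : Type} [Fintype W] [DecidableEq W] (q k : ℕ) (hq : 0 < q)
    (hqk : q ≤ k) (hW : Fintype.card W = 3 * q) (U : Finset (Finset W))
    (hUcard : U.card = k) (hU3 : ∀ u ∈ U, u.card = 3) :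
    InducedFree (GWU U (k - q)) TwoP3 := by
  intro f hf
  -- each path of the copy of `2P₃` contains a vertex of `V_U`
  have hM : ∀ a b c : Fin 6, TwoP3.Adj a b → TwoP3.Adj b c → ¬ TwoP3.Adj a c →
      a ≠ c →
      (∃ u, f a = Sum.inr (Sum.inl u)) ∨ (∃ u, f b = Sum.inr (Sum.inl u)) ∨
      (∃ u, f c = Sum.inr (Sum.inl u)) := by
    intro a b c hab hbc hac hac2
    by_contra hcon
    push_neg at hcon
    obtain ⟨hna, hnb, hnc⟩ := hcon
    have Hab := (hf a b).mp hab
    have Hbc := (hf b c).mp hbc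
    rcases hb : f b with w | u | x
    · rw [hb] at Hab Hbc
      rcases ha : f a with w' | u' | x'
      · rcases hc : f c with w'' | u'' | x''
        · have hne : w' ≠ w'' := by
            intro e
            exact hac2 (f.injective (by rw [ha, hc, e]))
          exact hac ((hf a c).mpr (by rw [ha, hc]; simp [GWU, hne]))
        · exact hnc u'' hc
        · rw [hc] at Hbc; simp [GWU] at Hbc
      · exact hna u' ha
      · rw [ha] at Hab; simp [GWU] at Hab
    · exact hnb u hb
    · rw [hb] at Hab
      rcases ha : f a with w' | u' | x'
      · rw [ha] at Hab; simp [GWU] at Hab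
      · exact hna u' ha
      · rw [ha] at Hab; simp [GWU] at Hab
  rcases hM 0 1 2
      (by simp only [TwoP3, SimpleGraph.fromRel_adj]; decide)
      (by simp only [TwoP3, SimpleGraph.fromRel_adj]; decide)
      (by simp only [TwoP3, SimpleGraph.fromRel_adj]; decide) (by decide)
    with ⟨u1, h1⟩ | ⟨u1, h1⟩ | ⟨u1, h1⟩ <;>
  rcases hM 3 4 5
      (by simp only [TwoP3, SimpleGraph.fromRel_adj]; decide)
      (by simp only [TwoP3, SimpleGraph.fromRel_adj]; decide)
      (by simp only [TwoP3, SimpleGraph.fromRel_adj]; decide) (by decide)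
    with ⟨u2, h2⟩ | ⟨u2, h2⟩ | ⟨u2, h2⟩
  · exact gwu_aux U (k - q) f hf 0 3 (by decide) (by decide) u1 u2 h1 h2
  · exact gwu_aux U (k - q) f hf 0 4 (by decide) (by decide) u1 u2 h1 h2
  · exact gwu_aux U (k - q) f hf 0 5 (by decide) (by decide) u1 u2 h1 h2
  · exact gwu_aux U (k - q) f hf 1 3 (by decide) (by decide) u1 u2 h1 h2
  · exact gwu_aux U (k - q) f hf 1 4 (by decide) (by decide) u1 u2 h1 h2
  · exact gwu_aux U (k - q) f hf 1 5 (by decide) (by decide) u1 u2 h1 h2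
  · exact gwu_aux U (k - q) f hf 2 3 (by decide) (by decide) u1 u2 h1 h2
  · exact gwu_aux U (k - q) f hf 2 4 (by decide) (by decide) u1 u2 h1 h2
  · exact gwu_aux U (k - q) f hf 2 5 (by decide) (by decide) u1 u2 h1 h2
end

section
/- The graph G_{W,U} is P6-free, i.e., it contains no induced path on 6 vertices. -/
/-- The "side" of a vertex: 0 for `V_W`, 1 for `V_U`, 2 for `A`. -/
def gwuSide {W S : Type} {m : ℕ} : W ⊕ (S ⊕ Fin m) → Fin 3
  | Sum.inl _ => 0
  | Sum.inr (Sum.inl _) => 1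
  | Sum.inr (Sum.inr _) => 2

/-- The combinatorial core: no assignment of sides to 6 path vertices is
consistent with the structure of `G_{W,U}`. -/
lemma gwu_no_side_assignment :
    ¬ ∃ s : Fin 6 → Fin 3,
      (∀ i j : Fin 6, ((i : ℕ) + 1 = j ∨ (j : ℕ) + 1 = i) →
        ¬(s i = 1 ∧ s j = 1) ∧ ¬(s i = 2 ∧ s j = 2) ∧ ¬(s i = 0 ∧ s j = 2)) ∧
      (∀ i j : Fin 6, i ≠ j → ¬((i : ℕ) + 1 = j ∨ (j : ℕ) + 1 = i) →
        ¬(s i = 1 ∧ s j = 2) ∧ ¬(s i = 0 ∧ s j = 0)) := by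
  set_option maxRecDepth 10000 in
  decide

section

variable {W : Type} {U : Finset (Finset W)} {m : ℕ}

lemma gwu_not_adj_11 {x y : W ⊕ ({u // u ∈ U} ⊕ Fin m)}
    (hx : gwuSide x = 1) (hy : gwuSide y = 1) : ¬ (GWU U m).Adj x y := by
  rcases x with w | u | a <;> rcases y with w' | u' | a' <;>
    simp_all [gwuSide, GWU, SimpleGraph.fromRel_adj]

lemma gwu_not_adj_22 {x y : W ⊕ ({u // u ∈ U} ⊕ Fin m)}
    (hx : gwuSide x = 2) (hy : gwuSide y = 2) : ¬ (GWU U m).Adj x y := by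
  rcases x with w | u | a <;> rcases y with w' | u' | a' <;>
    simp_all [gwuSide, GWU, SimpleGraph.fromRel_adj]

lemma gwu_not_adj_02 {x y : W ⊕ ({u // u ∈ U} ⊕ Fin m)}
    (hx : gwuSide x = 0) (hy : gwuSide y = 2) : ¬ (GWU U m).Adj x y := by
  rcases x with w | u | a <;> rcases y with w' | u' | a' <;>
    simp_all [gwuSide, GWU, SimpleGraph.fromRel_adj]

lemma gwu_adj_12 {x y : W ⊕ ({u // u ∈ U} ⊕ Fin m)}
    (hx : gwuSide x = 1) (hy : gwuSide y = 2) : (GWU U m).Adj x y := by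
  rcases x with w | u | a <;> rcases y with w' | u' | a' <;>
    simp_all [gwuSide, GWU, SimpleGraph.fromRel_adj]

lemma gwu_adj_00 {x y : W ⊕ ({u // u ∈ U} ⊕ Fin m)} (hne : x ≠ y)
    (hx : gwuSide x = 0) (hy : gwuSide y = 0) : (GWU U m).Adj x y := by
  rcases x with w | u | a <;> rcases y with w' | u' | a' <;>
    simp_all [gwuSide, GWU, SimpleGraph.fromRel_adj]

end

/-- `G_{W,U}` is `P₆`-free: it contains no induced path on 6 vertices. -/
theorem stmt_9 {W : Type} [Fintype W] [DecidableEq W] (q k : ℕ) (hq : 0 < q)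
    (hqk : q ≤ k) (hW : Fintype.card W = 3 * q) (U : Finset (Finset W))
    (hUcard : U.card = k) (hU3 : ∀ u ∈ U, u.card = 3) :
    InducedFree (GWU U (k - q)) (SimpleGraph.pathGraph 6) := by
  intro f hf
  apply gwu_no_side_assignment
  refine ⟨fun i => gwuSide (f i), ?_, ?_⟩
  · intro i j hij
    have hadj : (GWU U (k - q)).Adj (f i) (f j) := by
      rw [← hf]
      exact (SimpleGraph.pathGraph_adj).2 hij
    refine ⟨?_, ?_, ?_⟩
    · rintro ⟨h1, h2⟩; exact gwu_not_adj_11 h1 h2 hadj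
    · rintro ⟨h1, h2⟩; exact gwu_not_adj_22 h1 h2 hadj
    · rintro ⟨h1, h2⟩; exact gwu_not_adj_02 h1 h2 hadj
  · intro i j hne hnij
    have hnadj : ¬ (GWU U (k - q)).Adj (f i) (f j) := by
      rw [← hf]
      intro h
      exact hnij ((SimpleGraph.pathGraph_adj).1 h)
    refine ⟨?_, ?_⟩
    · rintro ⟨h1, h2⟩; exact hnadj (gwu_adj_12 h1 h2)
    · rintro ⟨h1, h2⟩
      exact hnadj (gwu_adj_00 (fun h => hne (f.injective h)) h1 h2)
end
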